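/- Let z₁, z₂ be complex numbers and let M be the real 2 × 2 matrix whose rows are (Re z₁, Im z₁) and (Re z₂, Im z₂). Then the smallest singular value of M satisfies σ_min(M)² = ½·(|z₁|² + |z₂|² − |z₁² + z₂²|). Equivalently, the minimum over unit vectors x ∈ ℝ² of (⟨(Re z₁, Im z₁), x⟩² + ⟨(Re z₂, Im z₂), x⟩²) equals ½·(|z₁|² + |z₂|² − |z₁² + z₂²|). -/

import Mathlib

/-!
Write a unit vector `x ∈ ℝ²` as the unit complex number `u = x₁ - i x₂`, so that
`⟨(Re z, Im z), x⟩ = Re (z u)`. Since `(Re ζ)² = (|ζ|² + Re ζ²) / 2`, the objective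
becomes `½ (|z₁|² + |z₂|² + Re ((z₁² + z₂²) u²))`, and as `u` runs over the unit circle so
does `u²`; hence `Re ((z₁² + z₂²) u²)` ranges exactly over `[-|z₁² + z₂²|, |z₁² + z₂²|]`.
-/

namespace Complex

theorem re_sq_eq (z : ℂ) : z.re ^ 2 = (‖z‖ ^ 2 + (z ^ 2).re) / 2 := by
  rw [Complex.sq_norm, normSq_apply, sq, sq, mul_re]
  ring

theorem norm_eq_one_iff_re_sq_add_im_sq {u : ℂ} : ‖u‖ = 1 ↔ u.re ^ 2 + u.im ^ 2 = 1 := by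
  rw [← pow_eq_one_iff_of_nonneg (norm_nonneg u) two_ne_zero, Complex.sq_norm, normSq_apply,
    sq, sq]

theorem re_mul_sq_of_norm_eq_one {u : ℂ} (hu : ‖u‖ = 1) (z : ℂ) :
    (z * u).re ^ 2 = (‖z‖ ^ 2 + (z ^ 2 * u ^ 2).re) / 2 := by
  rw [re_sq_eq, norm_mul, hu, mul_one, mul_pow]

theorem neg_norm_le_re_mul_of_norm_eq_one {v : ℂ} (hv : ‖v‖ = 1) (w : ℂ) :
    -‖w‖ ≤ (w * v).re :=
  neg_le_of_abs_le (by simpa [hv] using abs_re_le_norm (w * v))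

theorem exists_norm_eq_one_re_mul_sq_eq_neg_norm (w : ℂ) :
    ∃ u : ℂ, ‖u‖ = 1 ∧ (w * u ^ 2).re = -‖w‖ := by
  obtain ⟨v, hv, hwv⟩ : ∃ v : ℂ, ‖v‖ = 1 ∧ w * v = -‖w‖ := by
    rcases eq_or_ne w 0 with rfl | hw
    · exact ⟨1, by simp, by simp⟩
    · refine ⟨-‖w‖ / w, ?_, mul_div_cancel₀ _ hw⟩
      rw [norm_div, norm_neg, norm_real, Real.norm_of_nonneg (norm_nonneg w),
        div_self (norm_ne_zero_iff.mpr hw)]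
  obtain ⟨u, rfl⟩ := IsAlgClosed.exists_pow_nat_eq v two_pos
  refine ⟨u, ?_, by rw [hwv]; simp⟩
  rwa [norm_pow, pow_eq_one_iff_of_nonneg (norm_nonneg u) two_ne_zero] at hv

theorem isLeast_sum_re_mul_sq {ι : Type*} [Fintype ι] (z : ι → ℂ) :
    IsLeast { t : ℝ | ∃ u : ℂ, ‖u‖ = 1 ∧ t = ∑ i, (z i * u).re ^ 2 }
      ((1 / 2) * (∑ i, ‖z i‖ ^ 2 - ‖∑ i, z i ^ 2‖)) := by
  have objective {u : ℂ} (hu : ‖u‖ = 1) :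
      ∑ i, (z i * u).re ^ 2 =
        (1 / 2) * (∑ i, ‖z i‖ ^ 2 + ((∑ i, z i ^ 2) * u ^ 2).re) := by
    rw [Finset.sum_mul, re_sum, ← Finset.sum_add_distrib, Finset.mul_sum]
    exact Finset.sum_congr rfl fun i _ ↦ by rw [re_mul_sq_of_norm_eq_one hu]; ring
  constructor
  · obtain ⟨u, hu, hre⟩ := exists_norm_eq_one_re_mul_sq_eq_neg_norm (∑ i, z i ^ 2)
    exact ⟨u, hu, by rw [objective hu, hre, sub_eq_add_neg]⟩
  · rintro t ⟨u, hu, rfl⟩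
    have hu2 : ‖u ^ 2‖ = 1 := by rw [norm_pow, hu, one_pow]
    rw [objective hu]
    linarith [neg_norm_le_re_mul_of_norm_eq_one hu2 (∑ i, z i ^ 2)]

end Complex

theorem sigma_min_sq_eq (z₁ z₂ : ℂ) :
    IsLeast
      { t : ℝ | ∃ x : ℝ × ℝ, x.1 ^ 2 + x.2 ^ 2 = 1 ∧
          t = (z₁.re * x.1 + z₁.im * x.2) ^ 2 + (z₂.re * x.1 + z₂.im * x.2) ^ 2 }
      ((1 / 2) * (‖z₁‖ ^ 2 + ‖z₂‖ ^ 2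
        - ‖z₁ ^ 2 + z₂ ^ 2‖)) := by
  have hset : { t : ℝ | ∃ x : ℝ × ℝ, x.1 ^ 2 + x.2 ^ 2 = 1 ∧
          t = (z₁.re * x.1 + z₁.im * x.2) ^ 2 + (z₂.re * x.1 + z₂.im * x.2) ^ 2 } =
      { t : ℝ | ∃ u : ℂ, ‖u‖ = 1 ∧ t = ∑ i, (![z₁, z₂] i * u).re ^ 2 } := by
    ext t
    simp only [Set.mem_ofPred_eq, Fin.sum_univ_two, Matrix.cons_val_zero, Matrix.cons_val_one,
      Complex.mul_re, Complex.norm_eq_one_iff_re_sq_add_im_sq]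
    constructor
    · rintro ⟨x, hx, rfl⟩
      exact ⟨⟨x.1, -x.2⟩, by simpa using hx, by ring⟩
    · rintro ⟨u, hu, rfl⟩
      exact ⟨(u.re, -u.im), by simpa using hu, by ring⟩
  rw [hset]
  simpa only [Fin.sum_univ_two, Matrix.cons_val_zero, Matrix.cons_val_one]
    using Complex.isLeast_sum_re_mul_sq ![z₁, z₂]
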